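/- Let Θ₁ and Θ₂ be symmetric n×n Toeplitz matrices each of whose diagonal values form a monotone sequence (the entry on the k-th principal diagonal is θ_k^{(i)} with θ_1^{(i)} ≥ θ_2^{(i)} ≥ ... ≥ θ_{n-1}^{(i)}). Then for any permutation matrices Π₁, Π₂, the Frobenius distance satisfies ‖Θ₁ − Θ₂‖_F ≤ ‖Π₁ Θ₁ Π₁ᵀ − Π₂ Θ₂ Π₂ᵀ‖_F. -/

import Mathlib

/-- Symmetric Toeplitz matrix with diagonal values `θ |i-j|`. -/
noncomputable def toep (n : ℕ) (θ : ℕ → ℝ) : Matrix (Fin n) (Fin n) ℝ :=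
  fun i j => θ (((i : ℤ) - (j : ℤ)).natAbs)

/-- Frobenius norm of a real matrix. -/
noncomputable def frob {n : ℕ} (A : Matrix (Fin n) (Fin n) ℝ) : ℝ :=
  Real.sqrt (∑ i, ∑ j, (A i j) ^ 2)

/-!
Conjugating by `Π₁` reduces to `Π₁ = 1` and `Π₂ = σ`. Viewing matrices as vectors indexed by pairs
`(i, j)`, the squared distance is `‖a‖² - 2⟪a, b ∘ τ⟫ + ‖b‖²` with `τ = σ × σ`, so it suffices that
`⟪a, b ∘ τ⟫ ≤ ⟪a, b⟫`. Off the main diagonal both Toeplitz vectors are decreasing functions of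
`|i - j|`, hence monovary, while `τ` maps the main diagonal, where both are constant, to itself;
the rearrangement inequality concludes.
-/

open Finset Equiv

section Rearrangement

variable {ι : Type*} [Fintype ι] {f g : ι → ℝ}

theorem sum_sq_sub_le_sum_sq_sub_comp_perm (σ : Perm ι)
    (h : ∑ x, f x * g (σ x) ≤ ∑ x, f x * g x) :
    ∑ x, (f x - g x) ^ 2 ≤ ∑ x, (f x - g (σ x)) ^ 2 := by
  have hg : ∑ x, g (σ x) ^ 2 = ∑ x, g x ^ 2 := Equiv.sum_comp σ (g · ^ 2)
  have expand : ∀ u : ι → ℝ,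
      ∑ x, (f x - u x) ^ 2 = ∑ x, f x ^ 2 - 2 * ∑ x, f x * u x + ∑ x, u x ^ 2 := by
    intro u
    simp only [sub_sq, sum_add_distrib, sum_sub_distrib, mul_sum, mul_assoc]
  rw [expand g, expand fun x => g (σ x), hg]
  linarith

theorem MonovaryOn.sum_mul_comp_perm_le_sum_mul_of_invariant [DecidableEq ι] {s : Finset ι}
    (hfg : MonovaryOn f g s) (σ : Perm ι) (hσ : ∀ x, σ x ∈ s ↔ x ∈ s)
    (hg : ∀ x ∉ s, g (σ x) = g x) :
    ∑ x, f x * g (σ x) ≤ ∑ x, f x * g x := by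
  set σ' : Perm ι := Perm.ofSubtype (σ.subtypePerm hσ)
  have hσ' : ∀ x, g (σ x) = g (σ' x) := by
    intro x
    by_cases hx : x ∈ s
    · rw [Perm.ofSubtype_apply_of_mem _ hx]; rfl
    · rw [Perm.ofSubtype_apply_of_not_mem _ hx, hg x hx]
  have hsupp : {x | σ' x ≠ x} ⊆ s := fun x hx => by
    by_contra hxs
    exact hx (Perm.ofSubtype_apply_of_not_mem _ hxs)
  have hfix : ∀ x ∈ sᶜ, f x * g (σ' x) = f x * g x := fun x hx => by
    rw [Perm.ofSubtype_apply_of_not_mem _ (mem_compl.mp hx)]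
  simp only [hσ']
  rw [← sum_add_sum_compl s, ← sum_add_sum_compl s (fun x => f x * g x), sum_congr rfl hfix]
  exact add_le_add_left (hfg.sum_mul_comp_perm_le_sum_mul hsupp) _

end Rearrangement

section Frobenius

variable {n : ℕ}

theorem frob_eq_sqrt_sum_prod (A : Matrix (Fin n) (Fin n) ℝ) :
    frob A = √(∑ p : Fin n × Fin n, A p.1 p.2 ^ 2) := by
  rw [frob, Fintype.sum_prod_type' fun i j => A i j ^ 2]

theorem frob_submatrix_perm (A : Matrix (Fin n) (Fin n) ℝ) (π : Perm (Fin n)) :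
    frob (A.submatrix π π) = frob A := by
  simp only [frob, Matrix.submatrix_apply]
  rw [Equiv.sum_comp π fun i => ∑ j, A i (π j) ^ 2]
  exact congrArg _ (sum_congr rfl fun i _ => Equiv.sum_comp π fun j => A i j ^ 2)

theorem frob_submatrix_sub_submatrix (A B : Matrix (Fin n) (Fin n) ℝ) (π₁ π₂ : Perm (Fin n)) :
    frob (A.submatrix π₁ π₁ - B.submatrix π₂ π₂) =
      frob (A - B.submatrix (π₁.symm.trans π₂) (π₁.symm.trans π₂)) := by
  rw [← frob_submatrix_perm (A - _) π₁]
  congr 1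
  ext i j
  simp

theorem frob_sub_le_frob_sub_submatrix {A B : Matrix (Fin n) (Fin n) ℝ} (σ : Perm (Fin n))
    (h : ∑ i, ∑ j, A i j * B (σ i) (σ j) ≤ ∑ i, ∑ j, A i j * B i j) :
    frob (A - B) ≤ frob (A - B.submatrix σ σ) := by
  rw [frob_eq_sqrt_sum_prod, frob_eq_sqrt_sum_prod]
  apply Real.sqrt_le_sqrt
  rw [← Fintype.sum_prod_type', ← Fintype.sum_prod_type'] at h
  exact sum_sq_sub_le_sum_sq_sub_comp_perm (f := fun p => A p.1 p.2) (g := fun p => B p.1 p.2)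
    (σ.prodCongr σ) h

end Frobenius

section Toeplitz

variable {n : ℕ} {θ₁ θ₂ : ℕ → ℝ}

theorem toep_apply_self (θ : ℕ → ℝ) (i : Fin n) : toep n θ i i = θ 0 := by
  simp [toep]

theorem natAbs_sub_mem_Icc_of_ne {i j : Fin n} (h : i ≠ j) :
    ((i : ℤ) - (j : ℤ)).natAbs ∈ Set.Icc 1 (n - 1) := by
  have := Fin.val_ne_of_ne h
  constructor <;> omega

theorem sum_toep_mul_toep_submatrix_le (h₁ : AntitoneOn θ₁ (Set.Icc 1 (n - 1)))
    (h₂ : AntitoneOn θ₂ (Set.Icc 1 (n - 1))) (σ : Perm (Fin n)) :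
    ∑ i, ∑ j, toep n θ₁ i j * toep n θ₂ (σ i) (σ j) ≤ ∑ i, ∑ j, toep n θ₁ i j * toep n θ₂ i j := by
  rw [← Fintype.sum_prod_type', ← Fintype.sum_prod_type']
  have hmono : MonovaryOn (fun p : Fin n × Fin n => toep n θ₁ p.1 p.2)
      (fun p => toep n θ₂ p.1 p.2) (univ.offDiag : Finset (Fin n × Fin n)) :=
    ((h₁.monovaryOn h₂).comp_right fun p : Fin n × Fin n => ((p.1 : ℤ) - p.2).natAbs).subset
      fun p hp => natAbs_sub_mem_Icc_of_ne (mem_offDiag.mp hp).2.2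
  refine hmono.sum_mul_comp_perm_le_sum_mul_of_invariant (σ.prodCongr σ) (fun p => ?_)
    fun p hp => ?_
  · simp [σ.injective.ne_iff]
  · obtain ⟨i, j⟩ := p
    obtain rfl : i = j := by simpa using hp
    simp [toep_apply_self]

end Toeplitz

/-- For symmetric monotone Toeplitz matrices `Θ₁, Θ₂` and any permutations `π₁, π₂`,
`‖Θ₁ − Θ₂‖_F ≤ ‖Π₁ Θ₁ Π₁ᵀ − Π₂ Θ₂ Π₂ᵀ‖_F`. -/
theorem stmt4 (n : ℕ) (θ₁ θ₂ : ℕ → ℝ)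
    (h1 : ∀ k, 1 ≤ k → k + 1 ≤ n - 1 → θ₁ (k + 1) ≤ θ₁ k)
    (h2 : ∀ k, 1 ≤ k → k + 1 ≤ n - 1 → θ₂ (k + 1) ≤ θ₂ k)
    (π₁ π₂ : Equiv.Perm (Fin n)) :
    frob (toep n θ₁ - toep n θ₂) ≤
      frob ((toep n θ₁).submatrix π₁ π₁ - (toep n θ₂).submatrix π₂ π₂) := by
  have antitoneOn_Icc : ∀ θ : ℕ → ℝ, (∀ k, 1 ≤ k → k + 1 ≤ n - 1 → θ (k + 1) ≤ θ k) →
      AntitoneOn θ (Set.Icc 1 (n - 1)) := fun θ h =>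
    antitoneOn_of_add_one_le Set.ordConnected_Icc fun k _ hk hk1 => h k hk.1 hk1.2
  rw [frob_submatrix_sub_submatrix]
  exact frob_sub_le_frob_sub_submatrix _
    (sum_toep_mul_toep_submatrix_le (antitoneOn_Icc θ₁ h1) (antitoneOn_Icc θ₂ h2) _)
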